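/- arXiv:1906.11749 — 2 statements merged into one kernel-verified Lean document; each statement's English description precedes it below -/
import Mathlib

section
/- Let N ≥ 0 and let g : ℂ^{N+1} ∖ {0} → ℝ be defined by g(z) = −(∑_{k=0}^{N} k·|z_k|²)/(∑_{k=0}^{N} |z_k|²). For every nonzero z ∈ ℂ^{N+1}, the real Fréchet derivative of g vanishes at z if and only if z has exactly one nonzero coordinate; moreover, if z_j ≠ 0 and z_k = 0 for all k ≠ j, then g(z) = −j. -/
/-!
Up to sign, `g` is the Rayleigh quotient `R = A / B` of the diagonal form with weights
`a k = k`, where `A z = ∑ a k ‖z k‖²` and `B z = ∑ ‖z k‖²`. Differentiating `A = R * B` at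
`z ≠ 0` gives `B z • R' = A' - R z • B'`, the derivative of the weighted norm with shifted
weights `a k - R z`; this vanishes iff `a k = R z` whenever `z k ≠ 0`. As the weights are
distinct, that happens iff `z` has a single nonzero coordinate `z j`, and then `R z = a j`.
-/

noncomputable section

variable {ι E : Type*} [Fintype ι] [NormedAddCommGroup E]

def weightedNormSq (a : ι → ℝ) (z : ι → E) : ℝ := ∑ k, a k * ‖z k‖ ^ 2

lemma weightedNormSq_one_eq_zero_iff (z : ι → E) : weightedNormSq 1 z = 0 ↔ z = 0 := by
  simp [weightedNormSq, Finset.sum_eq_zero_iff_of_nonneg, funext_iff]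

lemma weightedNormSq_of_forall_ne_eq_zero (a : ι → ℝ) {z : ι → E} {j : ι}
    (hz : ∀ k, k ≠ j → z k = 0) : weightedNormSq a z = a j * ‖z j‖ ^ 2 :=
  Finset.sum_eq_single j (fun k _ hkj => by simp [hz k hkj]) (by simp)

def diagonalRayleighQuotient (a : ι → ℝ) (z : ι → E) : ℝ :=
  weightedNormSq a z / weightedNormSq 1 z

lemma diagonalRayleighQuotient_mul_weightedNormSq_one (a : ι → ℝ) :
    diagonalRayleighQuotient a * weightedNormSq 1 = (weightedNormSq a : (ι → E) → ℝ) := by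
  ext z
  by_cases hz : z = 0
  · subst hz; simp [weightedNormSq]
  · exact div_mul_cancel₀ _ ((weightedNormSq_one_eq_zero_iff z).not.mpr hz)

lemma diagonalRayleighQuotient_of_forall_ne_eq_zero (a : ι → ℝ) {z : ι → E} {j : ι}
    (hj : z j ≠ 0) (hz : ∀ k, k ≠ j → z k = 0) : diagonalRayleighQuotient a z = a j := by
  rw [diagonalRayleighQuotient, weightedNormSq_of_forall_ne_eq_zero a hz,
    weightedNormSq_of_forall_ne_eq_zero 1 hz, Pi.one_apply, one_mul]
  exact mul_div_cancel_right₀ _ (by positivity)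

variable [InnerProductSpace ℝ E]

def weightedNormSqDeriv (a : ι → ℝ) (z : ι → E) : (ι → E) →L[ℝ] ℝ :=
  ∑ k, a k • (2 • (innerSL ℝ (z k)).comp (ContinuousLinearMap.proj k))

@[simp]
lemma weightedNormSqDeriv_apply (a : ι → ℝ) (z v : ι → E) :
    weightedNormSqDeriv a z v = ∑ k, a k * (2 * inner ℝ (z k) (v k)) := by
  simp [weightedNormSqDeriv]

lemma hasFDerivAt_weightedNormSq (a : ι → ℝ) (z : ι → E) :
    HasFDerivAt (weightedNormSq a) (weightedNormSqDeriv a z) z :=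
  HasFDerivAt.fun_sum fun k _ =>
    (ContinuousLinearMap.proj k : (ι → E) →L[ℝ] E).hasFDerivAt.norm_sq.const_mul (a k)

lemma weightedNormSqDeriv_sub_const (a : ι → ℝ) (c : ℝ) (z : ι → E) :
    weightedNormSqDeriv (fun k => a k - c) z =
      weightedNormSqDeriv a z - c • weightedNormSqDeriv 1 z := by
  ext v
  simp [sub_mul, Finset.mul_sum]

lemma weightedNormSqDeriv_eq_zero_iff (a : ι → ℝ) (z : ι → E) :
    weightedNormSqDeriv a z = 0 ↔ ∀ k, a k = 0 ∨ z k = 0 := by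
  classical
  constructor
  · intro h k
    have hk := congrArg (fun L => L (Pi.single k (z k))) h
    simp only [weightedNormSqDeriv_apply, zero_apply] at hk
    rw [Finset.sum_eq_single k (fun i _ hik => by simp [hik]) (by simp)] at hk
    simpa using hk
  · intro h
    ext v
    simp only [weightedNormSqDeriv_apply, zero_apply]
    refine Finset.sum_eq_zero fun k _ => ?_
    rcases h k with hk | hk <;> simp [hk]

lemma differentiableAt_diagonalRayleighQuotient (a : ι → ℝ) {z : ι → E} (hz : z ≠ 0) :
    DifferentiableAt ℝ (diagonalRayleighQuotient a) z := by
  unfold diagonalRayleighQuotient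
  simp only [div_eq_mul_inv]
  exact (hasFDerivAt_weightedNormSq a z).differentiableAt.mul
    ((hasFDerivAt_weightedNormSq 1 z).differentiableAt.inv
      ((weightedNormSq_one_eq_zero_iff z).not.mpr hz))

lemma weightedNormSq_one_smul_fderiv_diagonalRayleighQuotient (a : ι → ℝ) {z : ι → E}
    (hz : z ≠ 0) :
    weightedNormSq 1 z • fderiv ℝ (diagonalRayleighQuotient a) z =
      weightedNormSqDeriv (fun k => a k - diagonalRayleighQuotient a z) z := by
  have hprod := (differentiableAt_diagonalRayleighQuotient a hz).hasFDerivAt.mul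
    (hasFDerivAt_weightedNormSq 1 z)
  rw [diagonalRayleighQuotient_mul_weightedNormSq_one] at hprod
  rw [weightedNormSqDeriv_sub_const, (hasFDerivAt_weightedNormSq a z).unique hprod]
  abel

lemma fderiv_diagonalRayleighQuotient_eq_zero_iff (a : ι → ℝ) {z : ι → E} (hz : z ≠ 0) :
    fderiv ℝ (diagonalRayleighQuotient a) z = 0 ↔
      ∀ k, z k ≠ 0 → a k = diagonalRayleighQuotient a z := by
  rw [← smul_eq_zero_iff_right ((weightedNormSq_one_eq_zero_iff z).not.mpr hz),
    weightedNormSq_one_smul_fderiv_diagonalRayleighQuotient a hz,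
    weightedNormSqDeriv_eq_zero_iff]
  simp only [sub_eq_zero, or_iff_not_imp_right]

lemma fderiv_diagonalRayleighQuotient_eq_zero_iff_existsUnique {a : ι → ℝ}
    (ha : Function.Injective a) {z : ι → E} (hz : z ≠ 0) :
    fderiv ℝ (diagonalRayleighQuotient a) z = 0 ↔ ∃! j, z j ≠ 0 := by
  rw [fderiv_diagonalRayleighQuotient_eq_zero_iff a hz]
  obtain ⟨j, hj⟩ := Function.ne_iff.mp hz
  constructor
  · intro hcrit
    exact ⟨j, hj, fun k hk => ha ((hcrit k hk).trans (hcrit j hj).symm)⟩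
  · rintro ⟨j, hj, huniq⟩ k hk
    rw [huniq k hk, diagonalRayleighQuotient_of_forall_ne_eq_zero a hj
      fun i hi => not_not.mp (mt (huniq i) hi)]

end

/-- The scale-invariant function `g(z) = -(∑ k |z_k|²)/(∑ |z_k|²)` on `ℂ^{N+1} ∖ {0}`,
inducing the perfect Morse function on `ℂP^N`: its real Fréchet derivative vanishes at a
nonzero `z` if and only if `z` has exactly one nonzero coordinate, and at such a point
with `z_j ≠ 0` the value of `g` is `-j`. -/
theorem stmt0 (N : ℕ)
    (g : (Fin (N + 1) → ℂ) → ℝ)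
    (hg : ∀ z, g z =
      -(∑ k : Fin (N + 1), ((k : ℕ) : ℝ) * ‖z k‖ ^ 2) /
        (∑ k : Fin (N + 1), ‖z k‖ ^ 2)) :
    ∀ z : Fin (N + 1) → ℂ, z ≠ 0 →
      ((fderiv ℝ g z = 0) ↔ (∃! j : Fin (N + 1), z j ≠ 0)) ∧
      (∀ j : Fin (N + 1), z j ≠ 0 → (∀ k, k ≠ j → z k = 0) →
        g z = -((j : ℕ) : ℝ)) := by
  have hg_eq :
      g = fun z => -diagonalRayleighQuotient (fun k : Fin (N + 1) => ((k : ℕ) : ℝ)) z := by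
    ext z
    simp [hg, diagonalRayleighQuotient, weightedNormSq, neg_div]
  have hinj : Function.Injective fun k : Fin (N + 1) => ((k : ℕ) : ℝ) :=
    Nat.cast_injective.comp Fin.val_injective
  intro z hz
  refine ⟨?_, fun j hj hzero => ?_⟩
  · rw [hg_eq, fderiv_fun_neg, neg_eq_zero]
    exact fderiv_diagonalRayleighQuotient_eq_zero_iff_existsUnique hinj hz
  · simp only [hg_eq, diagonalRayleighQuotient_of_forall_ne_eq_zero _ hj hzero]
end

section
/- Let N ≥ 0, let w ∈ ℂ^{N+1} be nonzero, and define c : ℝ → ℂ^{N+1} by c(t)_k = e^{2kt}·w_k for 0 ≤ k ≤ N. Then for each k and each t ∈ ℝ, the derivative of t ↦ c(t)_k equals 2k·c(t)_k; and, setting j = max{k : w_k ≠ 0} and i = min{k : w_k ≠ 0}, the normalized curve c(t)/‖c(t)‖ converges as t → +∞ to (w_j/|w_j|)·e_j and as t → −∞ to (w_i/|w_i|)·e_i, where e_k denotes the k-th standard basis vector of ℂ^{N+1} and ‖·‖ the standard Hermitian norm. -/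
/-!
Dividing the flow by `exp (a m * t)`, where `m` is the support index of largest weight, does not
change the normalized curve and leaves a curve converging to `w m • e m`, since every other
surviving coordinate carries a decaying exponential. Normalization is
continuous away from `0`, so the normalized curve converges to `(w m / |w m|) • e m`. The limit
at `-∞` is the limit at `+∞` of the flow with negated weights.
-/

open Filter Topology

section Normalize

variable {E : Type*} [NormedAddCommGroup E] [NormedSpace ℝ E]

theorem inv_norm_smul_pos_smul {r : ℝ} (hr : 0 < r) (x : E) :
    ‖r • x‖⁻¹ • r • x = ‖x‖⁻¹ • x := by
  rw [norm_smul, Real.norm_of_nonneg hr.le, smul_smul, mul_inv_rev, mul_assoc,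
    inv_mul_cancel₀ hr.ne', mul_one]

theorem continuousAt_inv_norm_smul {x : E} (hx : x ≠ 0) :
    ContinuousAt (fun y : E => ‖y‖⁻¹ • y) x :=
  (continuous_norm.continuousAt.inv₀ (norm_ne_zero_iff.mpr hx)).smul continuousAt_id

end Normalize

theorem EuclideanSpace.inv_norm_smul_single {ι : Type*} [Fintype ι] [DecidableEq ι]
    (m : ι) (z : ℂ) :
    ‖single m z‖⁻¹ • single m z = (z / (‖z‖ : ℂ)) • single m (1 : ℂ) := by
  ext k
  simp [PiLp.single_apply, Complex.real_smul, div_eq_inv_mul]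

noncomputable def expFlow {ι : Type*} (a : ι → ℝ) (w : EuclideanSpace ℂ ι) (t : ℝ) :
    EuclideanSpace ℂ ι :=
  WithLp.toLp 2 fun k => (Real.exp (a k * t) : ℂ) * w k

section ExpFlow

variable {ι : Type*} (a : ι → ℝ) (w : EuclideanSpace ℂ ι)

@[simp]
theorem expFlow_apply (t : ℝ) (k : ι) : expFlow a w t k = (Real.exp (a k * t) : ℂ) * w k := rfl

theorem hasDerivAt_expFlow_apply (k : ι) (t : ℝ) :
    HasDerivAt (fun s => expFlow a w s k) ((a k : ℂ) * expFlow a w t k) t := by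
  have hexp : HasDerivAt (fun s => Real.exp (a k * s)) (Real.exp (a k * t) * a k) t :=
    ((hasDerivAt_id t).const_mul (a k)).exp.congr_deriv (by simp)
  refine (hexp.ofReal_comp.mul_const (w k)).congr_deriv ?_
  rw [expFlow_apply]
  push_cast
  ring

theorem expFlow_neg (t : ℝ) : expFlow a w (-t) = expFlow (-a) w t := by
  ext k
  simp

theorem expFlow_eq_exp_smul (b t : ℝ) :
    expFlow a w t = Real.exp (b * t) • expFlow (a - fun _ => b) w t := by
  ext k
  simp only [expFlow_apply, PiLp.smul_apply, Complex.real_smul, Pi.sub_apply, ← mul_assoc,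
    ← Complex.ofReal_mul, ← Real.exp_add]
  congr 3
  ring

variable [DecidableEq ι]

theorem tendsto_expFlow_atTop_single {m : ι} (hm : a m = 0)
    (hneg : ∀ k, w k ≠ 0 → k ≠ m → a k < 0) :
    Tendsto (expFlow a w) atTop (𝓝 (EuclideanSpace.single m (w m))) := by
  refine ((PiLp.continuous_toLp 2 _).tendsto (Pi.single (M := fun _ => ℂ) m (w m))).comp
    (tendsto_pi_nhds.2 fun k => ?_)
  rcases eq_or_ne k m with rfl | hkm
  · simp [hm]
  rw [Pi.single_eq_of_ne hkm]
  by_cases hwk : w k = 0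
  · simp [hwk]
  have hexp : Tendsto (fun t => Real.exp (a k * t)) atTop (𝓝 0) :=
    Real.tendsto_exp_atBot.comp (tendsto_id.const_mul_atTop_of_neg (hneg k hwk hkm))
  simpa using (Complex.continuous_ofReal.tendsto 0 |>.comp hexp).mul_const (w k)

variable [Fintype ι]

theorem tendsto_inv_norm_smul_expFlow_atTop {m : ι} (hm : w m ≠ 0)
    (hdom : ∀ k, w k ≠ 0 → k ≠ m → a k < a m) :
    Tendsto (fun t => ‖expFlow a w t‖⁻¹ • expFlow a w t) atTop
      (𝓝 ((w m / (‖w m‖ : ℂ)) • EuclideanSpace.single m (1 : ℂ))) := by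
  have hlim := tendsto_expFlow_atTop_single (a - fun _ => a m) w (sub_self (a m))
    fun k hk hkm => sub_neg.2 (hdom k hk hkm)
  rw [← EuclideanSpace.inv_norm_smul_single]
  refine ((continuousAt_inv_norm_smul ?_).tendsto.comp hlim).congr fun t => ?_
  · simpa using hm
  simp only [Function.comp_apply, expFlow_eq_exp_smul a w (a m) t,
    inv_norm_smul_pos_smul (Real.exp_pos _)]

theorem tendsto_inv_norm_smul_expFlow_atBot {m : ι} (hm : w m ≠ 0)
    (hdom : ∀ k, w k ≠ 0 → k ≠ m → a m < a k) :
    Tendsto (fun t => ‖expFlow a w t‖⁻¹ • expFlow a w t) atBot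
      (𝓝 ((w m / (‖w m‖ : ℂ)) • EuclideanSpace.single m (1 : ℂ))) := by
  have := (tendsto_inv_norm_smul_expFlow_atTop (-a) w hm
    fun k hk hkm => neg_lt_neg (hdom k hk hkm)).comp tendsto_neg_atBot_atTop
  simpa [Function.comp_def, expFlow_neg] using this

end ExpFlow

theorem stmt2_general (N : ℕ) (w : EuclideanSpace ℂ (Fin (N + 1)))
    (c : ℝ → EuclideanSpace ℂ (Fin (N + 1)))
    (hc : ∀ t k, c t k = (Real.exp (2 * ((k : ℕ) : ℝ) * t) : ℂ) * w k)
    (j i : Fin (N + 1))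
    (hj : w j ≠ 0) (hjmax : ∀ k, w k ≠ 0 → k ≤ j)
    (hi : w i ≠ 0) (himin : ∀ k, w k ≠ 0 → i ≤ k) :
    (∀ (k : Fin (N + 1)) (t : ℝ),
      HasDerivAt (fun s => c s k) ((2 * ((k : ℕ) : ℂ)) * c t k) t) ∧
    Tendsto (fun t => ‖c t‖⁻¹ • c t) atTop
      (nhds ((w j / (‖w j‖ : ℂ)) • EuclideanSpace.single j (1 : ℂ))) ∧
    Tendsto (fun t => ‖c t‖⁻¹ • c t) atBot
      (nhds ((w i / (‖w i‖ : ℂ)) • EuclideanSpace.single i (1 : ℂ))) := by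
  set a : Fin (N + 1) → ℝ := fun k => 2 * ((k : ℕ) : ℝ)
  obtain rfl : c = expFlow a w := funext fun t => by ext k; exact hc t k
  refine ⟨fun k t => by simpa [a] using hasDerivAt_expFlow_apply a w k t, ?_, ?_⟩
  · refine tendsto_inv_norm_smul_expFlow_atTop a w hj fun k hk hkj => ?_
    have : k < j := (hjmax k hk).lt_of_ne hkj
    simp only [a]
    norm_cast
    omega
  · refine tendsto_inv_norm_smul_expFlow_atBot a w hi fun k hk hki => ?_
    have : i < k := (himin k hk).lt_of_ne' hki
    simp only [a]
    norm_cast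
    omega

/-- The lifted linear flow `c(t)_k = e^{2kt} w_k` on `ℂ^{N+1} ∖ {0}`: each coordinate
satisfies `(c(t)_k)' = 2k · c(t)_k`, and the normalized curve `c(t)/‖c(t)‖` converges as
`t → +∞` (resp. `t → −∞`) to `(w_j/|w_j|) e_j` (resp. `(w_i/|w_i|) e_i`), where `j`
(resp. `i`) is the maximal (resp. minimal) index in the support of `w`. -/
theorem stmt2 (N : ℕ) (w : EuclideanSpace ℂ (Fin (N + 1))) (hw : w ≠ 0)
    (c : ℝ → EuclideanSpace ℂ (Fin (N + 1)))
    (hc : ∀ t k, c t k = (Real.exp (2 * ((k : ℕ) : ℝ) * t) : ℂ) * w k)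
    (j i : Fin (N + 1))
    (hj : w j ≠ 0) (hjmax : ∀ k, w k ≠ 0 → k ≤ j)
    (hi : w i ≠ 0) (himin : ∀ k, w k ≠ 0 → i ≤ k) :
    (∀ (k : Fin (N + 1)) (t : ℝ),
      HasDerivAt (fun s => c s k) ((2 * ((k : ℕ) : ℂ)) * c t k) t) ∧
    Tendsto (fun t => ‖c t‖⁻¹ • c t) atTop
      (nhds ((w j / (‖w j‖ : ℂ)) • EuclideanSpace.single j (1 : ℂ))) ∧
    Tendsto (fun t => ‖c t‖⁻¹ • c t) atBot
      (nhds ((w i / (‖w i‖ : ℂ)) • EuclideanSpace.single i (1 : ℂ))) :=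
  stmt2_general N w c hc j i hj hjmax hi himin
end
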